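/- For the independence Metropolis-Hastings sampler with proposal $q$ and target $\pi$ on a finite state space, if the importance weights are bounded, i.e., $\pi(s)/q(s) \le M$ for all $s$, then the transition kernel satisfies $K(s' \mid s) \ge \pi(s')/M$ for all $s \ne s'$, and hence the chain is uniformly ergodic with total variation distance to $\pi$ after $t$ steps at most $(1 - 1/M)^t$. -/
import Mathlib


open Finset

/-- Uniform ergodicity of the independence Metropolis-Hastings sampler: if the
importance weights satisfy `π(s)/q(s) ≤ M` for all `s`, then the kernel
satisfies the minorization `K(s'∣s) ≥ π(s')/M` for `s' ≠ s`, and the chain is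
uniformly ergodic: the total variation distance to `π` after `t` steps is at
most `(1 - 1/M)^t`. -/
theorem independence_mh_uniform_ergodicity
    {S : Type*} [Fintype S] [DecidableEq S]
    (π q : S → ℝ)
    (hπ : ∀ s, 0 < π s) (hπsum : ∑ s, π s = 1)
    (hq : ∀ s, 0 < q s) (hqsum : ∑ s, q s = 1)
    (M : ℝ) (hM : ∀ s, π s / q s ≤ M)
    (a : S → S → ℝ)
    (ha : ∀ s s', a s s' = min 1 (π s' * q s / (π s * q s')))
    (K : Matrix S S ℝ)
    (hK : ∀ s s', K s s' = q s' * a s s' +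
      (if s' = s then ∑ t, q t * (1 - a s t) else 0)) :
    (∀ s s', s ≠ s' → π s' / M ≤ K s s') ∧
    (∀ (s : S) (t : ℕ),
      (1 / 2) * ∑ s', |(K ^ t) s s' - π s'| ≤ (1 - 1 / M) ^ t) := by
  -- S is nonempty
  rcases isEmpty_or_nonempty S with hS | hS
  · exact absurd hπsum (by simp)
  -- M > 0
  obtain ⟨s₀⟩ := hS
  have hM0 : 0 < M := lt_of_lt_of_le (div_pos (hπ s₀) (hq s₀)) (hM s₀)
  -- π s ≤ M * q s
  have hMq : ∀ s, π s ≤ M * q s := fun s => (div_le_iff₀ (hq s)).mp (hM s)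
  -- M ≥ 1
  have hM1 : 1 ≤ M := by
    have : ∑ s, π s ≤ ∑ s, M * q s := Finset.sum_le_sum fun s _ => hMq s
    rwa [hπsum, ← Finset.mul_sum, hqsum, mul_one] at this
  -- a bounds
  have ha0 : ∀ s s', 0 ≤ a s s' := by
    intro s s'; rw [ha]
    exact le_min zero_le_one (div_nonneg (mul_pos (hπ s') (hq s)).le (mul_pos (hπ s) (hq s')).le)
  have ha1 : ∀ s s', a s s' ≤ 1 := by intro s s'; rw [ha]; exact min_le_left _ _
  -- key product identity
  have hkey : ∀ s s', π s * (q s' * a s s') = min (π s * q s') (π s' * q s) := by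
    intro s s'
    rw [ha, ← mul_assoc,
      mul_min_of_nonneg _ _ (mul_pos (hπ s) (hq s')).le, mul_one,
      mul_div_cancel₀ _ (mul_pos (hπ s) (hq s')).ne']
  -- minorization for all pairs
  have hminor : ∀ s s', π s' / M ≤ K s s' := by
    intro s s'
    have hq' : π s' / M ≤ q s' := by
      rw [div_le_iff₀ hM0]
      calc π s' ≤ M * q s' := hMq s'
        _ = q s' * M := mul_comm _ _
    have hdiag0 : 0 ≤ ∑ t, q t * (1 - a s t) :=
      Finset.sum_nonneg fun t _ => mul_nonneg (hq t).le (by linarith [ha1 s t])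
    have hqa : π s' / M ≤ q s' * a s s' := by
      rcases min_cases 1 (π s' * q s / (π s * q s')) with ⟨h1, _⟩ | ⟨h1, h2⟩
      · rw [ha, h1, mul_one]; exact hq'
      · rw [ha, h1]
        rw [mul_div_assoc']
        rw [div_le_div_iff₀ hM0 (mul_pos (hπ s) (hq s'))]
        calc π s' * (π s * q s') = π s' * q s' * π s := by ring
          _ ≤ π s' * q s' * (M * q s) := by
              exact mul_le_mul_of_nonneg_left (hMq s) (mul_pos (hπ s') (hq s')).le
          _ = q s' * (π s' * q s) * M := by ring
    rw [hK]
    by_cases h : s' = s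
    · subst h; rw [if_pos rfl]; linarith
    · simp only [if_neg h, add_zero]; exact hqa
  -- K nonneg
  have hKpos : ∀ s s', 0 ≤ K s s' := fun s s' =>
    le_trans (div_nonneg (hπ s').le hM0.le) (hminor s s')
  -- row sums
  have hrow : ∀ s, ∑ s', K s s' = 1 := by
    intro s
    have h1 : ∑ s', K s s' = ∑ s', q s' * a s s' + ∑ t, q t * (1 - a s t) := by
      simp [hK, Finset.sum_add_distrib]
    have h2 : ∑ s', q s' * a s s' + ∑ t, q t * (1 - a s t) = ∑ t, q t := by
      rw [← Finset.sum_add_distrib]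
      exact Finset.sum_congr rfl fun t _ => by ring
    rw [h1, h2, hqsum]
  -- detailed balance
  have hdb : ∀ s s', π s * K s s' = π s' * K s' s := by
    intro s s'
    by_cases h : s' = s
    · rw [h]
    · rw [hK, hK, if_neg h, if_neg (Ne.symm h), add_zero, add_zero, hkey, hkey,
        min_comm]
  -- stationarity
  have hstat : ∀ s', ∑ s, π s * K s s' = π s' := by
    intro s'
    calc ∑ s, π s * K s s' = ∑ s, π s' * K s' s :=
          Finset.sum_congr rfl fun s _ => hdb s s'
      _ = π s' * ∑ s, K s' s := by rw [Finset.mul_sum]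
      _ = π s' := by rw [hrow, mul_one]
  -- row sums of powers
  have hrowt : ∀ t s, ∑ s', (K ^ t) s s' = 1 := by
    intro t
    induction t with
    | zero => intro s; simp [Matrix.one_apply, Finset.sum_ite_eq']
    | succ t ih =>
        intro s
        have : ∀ s', (K ^ (t+1)) s s' = ∑ u, (K ^ t) s u * K u s' := by
          intro s'; rw [pow_succ, Matrix.mul_apply]
        simp_rw [this]
        rw [Finset.sum_comm]
        calc ∑ u, ∑ s', (K ^ t) s u * K u s'
            = ∑ u, (K ^ t) s u * ∑ s', K u s' := by
              simp_rw [Finset.mul_sum]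
          _ = ∑ u, (K ^ t) s u := by simp_rw [hrow, mul_one]
          _ = 1 := ih s
  -- E column sums
  have hEsum : ∀ u, ∑ s', (K u s' - π s' / M) = 1 - 1 / M := by
    intro u
    rw [Finset.sum_sub_distrib, hrow, ← Finset.sum_div, hπsum]
  have hE0 : ∀ u s', 0 ≤ K u s' - π s' / M := fun u s' => by linarith [hminor u s']
  have h1M : 0 ≤ 1 - 1 / M := by
    have : 1 / M ≤ 1 := by rw [div_le_one hM0]; exact hM1
    linarith
  -- main induction
  have hD : ∀ t s, ∑ s', |(K ^ t) s s' - π s'| ≤ 2 * (1 - 1 / M) ^ t := by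
    intro t
    induction t with
    | zero =>
        intro s
        have hb : ∀ s', |(K ^ 0) s s' - π s'| ≤ (K ^ 0) s s' + π s' := by
          intro s'
          have h0 : (0:ℝ) ≤ (K ^ 0) s s' := by
            simp [Matrix.one_apply]; split <;> norm_num
          calc |(K ^ 0) s s' - π s'| ≤ |(K ^ 0) s s'| + |π s'| := abs_sub _ _
            _ = (K ^ 0) s s' + π s' := by
                rw [abs_of_nonneg h0, abs_of_nonneg (hπ s').le]
        calc ∑ s', |(K ^ 0) s s' - π s'| ≤ ∑ s', ((K ^ 0) s s' + π s') :=
              Finset.sum_le_sum fun s' _ => hb s'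
          _ = 2 := by rw [Finset.sum_add_distrib, hrowt 0 s, hπsum]; norm_num
          _ = 2 * (1 - 1/M) ^ 0 := by norm_num
    | succ t ih =>
        intro s
        have expand : ∀ s', (K ^ (t+1)) s s' - π s' =
            ∑ u, ((K ^ t) s u - π u) * (K u s' - π s' / M) := by
          intro s'
          have h1 : (K ^ (t+1)) s s' = ∑ u, (K ^ t) s u * K u s' := by
            rw [pow_succ, Matrix.mul_apply]
          have h2 : ∑ u, (K ^ t) s u * (π s' / M) = π s' / M := by
            rw [← Finset.sum_mul, hrowt t s, one_mul]
          have h4 : ∑ u, π u * (π s' / M) = π s' / M := by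
            rw [← Finset.sum_mul, hπsum, one_mul]
          have h5 : ∑ u, ((K ^ t) s u - π u) * (K u s' - π s' / M)
              = (∑ u, (K ^ t) s u * K u s') - (∑ u, (K ^ t) s u * (π s' / M))
                - (∑ u, π u * K u s') + ∑ u, π u * (π s' / M) := by
            rw [← Finset.sum_sub_distrib, ← Finset.sum_sub_distrib,
              ← Finset.sum_add_distrib]
            exact Finset.sum_congr rfl fun u _ => by ring
          rw [h5, h2, h4, hstat s', h1]
          ring
        calc ∑ s', |(K ^ (t+1)) s s' - π s'|
            = ∑ s', |∑ u, ((K ^ t) s u - π u) * (K u s' - π s' / M)| := by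
              simp_rw [expand]
          _ ≤ ∑ s', ∑ u, |(K ^ t) s u - π u| * (K u s' - π s' / M) := by
              apply Finset.sum_le_sum
              intro s' _
              calc |∑ u, ((K ^ t) s u - π u) * (K u s' - π s' / M)|
                  ≤ ∑ u, |((K ^ t) s u - π u) * (K u s' - π s' / M)| :=
                    Finset.abs_sum_le_sum_abs _ _
                _ = ∑ u, |(K ^ t) s u - π u| * (K u s' - π s' / M) := by
                    refine Finset.sum_congr rfl fun u _ => ?_
                    rw [abs_mul, abs_of_nonneg (hE0 u s')]
          _ = ∑ u, |(K ^ t) s u - π u| * (1 - 1 / M) := by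
              rw [Finset.sum_comm]
              refine Finset.sum_congr rfl fun u _ => ?_
              rw [← Finset.mul_sum, hEsum]
          _ = (1 - 1 / M) * ∑ u, |(K ^ t) s u - π u| := by
              rw [Finset.mul_sum]
              exact Finset.sum_congr rfl fun u _ => mul_comm _ _
          _ ≤ (1 - 1 / M) * (2 * (1 - 1 / M) ^ t) :=
              mul_le_mul_of_nonneg_left (ih s) h1M
          _ = 2 * (1 - 1 / M) ^ (t+1) := by ring
  refine ⟨fun s s' _ => hminor s s', fun s t => ?_⟩
  have := hD t s
  linarith
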